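/- arXiv:1502.02221 — 2 statements merged into one kernel-verified Lean document; each statement's English description precedes it below -/
import Mathlib

section
/- Let $1 < p < 2$ and let $(u_n), u_0$ be in $L^2(\mathbb{R}^N)$ with $\sup_n \|u_n\|_{L^2} < \infty$. Let $\xi \in L^{2/(2-p)}(\mathbb{R}^N)$, $\xi \ge 0$, and $f : \mathbb{R} \to \mathbb{R}$ continuous with $|f(u)| \le \xi(x)|u|^{p-1}$ (pointwise in $x$ after composition). Assume $u_n \to u_0$ in $L^2(B_R)$ for every $R > 0$. Then $\int_{\mathbb{R}^N} |f(u_n) - f(u_0)|\,|u_n - u_0|\,dx \to 0$ as $n \to \infty$. -/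
/-!
Since `|f(v) - f(w)| ≤ ξ (|v|^{p-1} + |w|^{p-1})` and `1/2 = (2-p)/2 + (p-1)/2`, Hölder's
inequality bounds the interaction integral over any set `S` by
`‖ξ‖_{L^{2/(2-p)}(S)} (‖uₙ‖₂^{p-1} + ‖u₀‖₂^{p-1}) ‖uₙ - u₀‖_{L²(S)}`.
On a ball the last factor tends to zero; outside a large ball the first one is uniformly small,
because the tails of `ξ ∈ L^{2/(2-p)}` vanish, while the other factors stay bounded.
-/

open MeasureTheory Filter Topology
open scoped ENNReal

theorem ENNReal.tendsto_zero_of_le_add {ι κ : Type*} {l : Filter ι} [l.NeBot] {l' : Filter κ}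
    {a : κ → ℝ≥0∞} {b : ι → κ → ℝ≥0∞} {c : ι → ℝ≥0∞}
    (hb : ∀ᶠ i in l, Tendsto (b i) l' (𝓝 0)) (hc : Tendsto c l (𝓝 0))
    (hab : ∀ᶠ i in l, ∀ k, a k ≤ b i k + c i) : Tendsto a l' (𝓝 0) := by
  refine ENNReal.tendsto_nhds_zero.2 fun ε hε => ?_
  have hε2 : 0 < ε / 2 := ENNReal.half_pos hε.ne'
  obtain ⟨i, hbi, hci, habi⟩ :=
    (hb.and ((ENNReal.tendsto_nhds_zero.1 hc _ hε2).and hab)).exists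
  filter_upwards [ENNReal.tendsto_nhds_zero.1 hbi _ hε2] with k hk
  calc a k ≤ b i k + c i := habi k
    _ ≤ ε / 2 + ε / 2 := add_le_add hk hci
    _ = ε := ENNReal.add_halves ε

theorem tendsto_eLpNorm_two_of_tendsto_integral_sq {α ι : Type*} [MeasurableSpace α]
    {μ : Measure α} {l : Filter ι} {g : ι → α → ℝ} (hg : ∀ i, MemLp (g i) 2 μ)
    (h : Tendsto (fun i => ∫ x, g i x ^ 2 ∂μ) l (𝓝 0)) :
    Tendsto (fun i => eLpNorm (g i) 2 μ) l (𝓝 0) := by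
  have heq : ∀ i, eLpNorm (g i) 2 μ = ENNReal.ofReal ((∫ x, g i x ^ 2 ∂μ) ^ (2 : ℝ)⁻¹) := by
    intro i
    simp [(hg i).eLpNorm_eq_integral_rpow_norm two_ne_zero ENNReal.ofNat_ne_top]
  simp_rw [heq]
  simpa using ENNReal.tendsto_ofReal (h.rpow_const_nhds_zero (by norm_num : (0 : ℝ) < 2⁻¹))

theorem tendsto_integral_zero_of_tendsto_eLpNorm_one {α ι E : Type*} [MeasurableSpace α]
    {μ : Measure α} [NormedAddCommGroup E] [NormedSpace ℝ E] {l : Filter ι} {F : ι → α → E}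
    (h : Tendsto (fun i => eLpNorm (F i) 1 μ) l (𝓝 0)) :
    Tendsto (fun i => ∫ x, F i x ∂μ) l (𝓝 0) := by
  refine tendsto_zero_iff_enorm_tendsto_zero.2 <|
    tendsto_of_tendsto_of_tendsto_of_le_of_le tendsto_const_nhds h (fun _ => zero_le) fun i => ?_
  rw [eLpNorm_one_eq_lintegral_enorm]
  exact enorm_integral_le_lintegral_enorm _

theorem ENNReal.holderTriple_ofReal_two_div {p : ℝ} (hp1 : 1 < p) (hp2 : p < 2) :
    ENNReal.HolderTriple (ENNReal.ofReal (2 / (2 - p))) (ENNReal.ofReal (2 / (p - 1))) 2 := by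
  have h2p : 0 < 2 - p := by linarith
  have hp1' : 0 < p - 1 := by linarith
  constructor
  rw [← ENNReal.ofReal_inv_of_pos (by positivity), ← ENNReal.ofReal_inv_of_pos (by positivity),
    ← ENNReal.ofReal_add (by positivity) (by positivity), inv_div, inv_div,
    ← ENNReal.ofReal_ofNat 2, ← ENNReal.ofReal_inv_of_pos two_pos]
  congr 1
  ring

section Holder

variable {α : Type*} [MeasurableSpace α] {μ : Measure α}

theorem eLpNorm_abs_rpow {q : ℝ} (hq : 0 < q) (u : α → ℝ) :
    eLpNorm (fun x => |u x| ^ q) (ENNReal.ofReal (2 / q)) μ = eLpNorm u 2 μ ^ q := by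
  simp only [← Real.norm_eq_abs]
  rw [eLpNorm_norm_rpow u hq, ← ENNReal.ofReal_mul (by positivity), div_mul_cancel₀ _ hq.ne',
    ENNReal.ofReal_ofNat]

theorem eLpNorm_mul_abs_rpow_le {p : ℝ} (hp1 : 1 < p) (hp2 : p < 2) {ξ u : α → ℝ}
    (hξ : AEStronglyMeasurable ξ μ) (hu : AEStronglyMeasurable u μ) :
    eLpNorm (fun x => ξ x * |u x| ^ (p - 1)) 2 μ ≤
      eLpNorm ξ (ENNReal.ofReal (2 / (2 - p))) μ * eLpNorm u 2 μ ^ (p - 1) := by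
  have := ENNReal.holderTriple_ofReal_two_div hp1 hp2
  rw [← eLpNorm_abs_rpow (sub_pos.2 hp1)]
  exact (eLpNorm_smul_le_mul_eLpNorm (p := ENNReal.ofReal (2 / (2 - p)))
    (q := ENNReal.ofReal (2 / (p - 1))) (r := 2) (f := fun x => |u x| ^ (p - 1))
    (hu.aemeasurable.abs.pow_const _).aestronglyMeasurable hξ :)

theorem eLpNorm_one_abs_sub_mul_abs_sub_le {p : ℝ} (hp1 : 1 < p) (hp2 : p < 2)
    {ξ v w : α → ℝ} {f : ℝ → ℝ} (hξ : AEStronglyMeasurable ξ μ) (hv : AEStronglyMeasurable v μ)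
    (hw : AEStronglyMeasurable w μ) (hfv : ∀ x, |f (v x)| ≤ ξ x * |v x| ^ (p - 1))
    (hfw : ∀ x, |f (w x)| ≤ ξ x * |w x| ^ (p - 1)) :
    eLpNorm (fun x => |f (v x) - f (w x)| * |v x - w x|) 1 μ ≤
      eLpNorm ξ (ENNReal.ofReal (2 / (2 - p))) μ *
        (eLpNorm v 2 μ ^ (p - 1) + eLpNorm w 2 μ ^ (p - 1)) * eLpNorm (v - w) 2 μ := by
  have hrpow : ∀ {u : α → ℝ}, AEStronglyMeasurable u μ →
      AEStronglyMeasurable (fun x => ξ x * |u x| ^ (p - 1)) μ := fun hu =>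
    hξ.mul (hu.aemeasurable.abs.pow_const _).aestronglyMeasurable
  set G := fun x => ξ x * |v x| ^ (p - 1) + ξ x * |w x| ^ (p - 1)
  have hpt : ∀ x, ‖|f (v x) - f (w x)| * |v x - w x|‖ ≤ ‖G x * (v - w) x‖ := fun x => by
    have hGx : |f (v x) - f (w x)| ≤ G x := (abs_sub _ _).trans (add_le_add (hfv x) (hfw x))
    simp only [norm_mul, Real.norm_eq_abs, abs_abs, Pi.sub_apply,
      abs_of_nonneg ((abs_nonneg _).trans hGx)]
    gcongr
  calc eLpNorm (fun x => |f (v x) - f (w x)| * |v x - w x|) 1 μ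
      ≤ eLpNorm (G • (v - w)) 1 μ := eLpNorm_mono hpt
    _ ≤ eLpNorm G 2 μ * eLpNorm (v - w) 2 μ :=
      eLpNorm_smul_le_mul_eLpNorm (hv.sub hw) ((hrpow hv).add (hrpow hw))
    _ ≤ (eLpNorm (fun x => ξ x * |v x| ^ (p - 1)) 2 μ +
          eLpNorm (fun x => ξ x * |w x| ^ (p - 1)) 2 μ) * eLpNorm (v - w) 2 μ := by
      gcongr
      exact eLpNorm_add_le (hrpow hv) (hrpow hw) one_le_two
    _ ≤ _ := by
      rw [mul_add]
      gcongr <;> exact eLpNorm_mul_abs_rpow_le hp1 hp2 hξ ‹_›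

end Holder

section Tail

variable {α : Type*} [PseudoMetricSpace α] [MeasurableSpace α] [OpensMeasurableSpace α]
  {μ : Measure α}

theorem tendsto_setLIntegral_compl_closedBall {g : α → ℝ≥0∞} (hg : ∫⁻ x, g x ∂μ ≠ ∞) (c : α) :
    Tendsto (fun R : ℝ => ∫⁻ x in (Metric.closedBall c R)ᶜ, g x ∂μ) atTop (𝓝 0) := by
  have hmeas : ∀ R : ℝ, MeasurableSet (Metric.closedBall c R)ᶜ := fun _ =>
    Metric.isClosed_closedBall.measurableSet.compl
  have hanti : Antitone fun R : ℝ => (Metric.closedBall c R)ᶜ := fun _ _ h =>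
    Set.compl_subset_compl.2 (Metric.closedBall_subset_closedBall h)
  have hempty : ⋂ R : ℝ, (Metric.closedBall c R)ᶜ = ∅ := by
    rw [← Set.compl_iUnion, Set.compl_empty_iff, Set.eq_univ_iff_forall]
    exact fun x => Set.mem_iUnion.2 ⟨dist x c, Metric.mem_closedBall.2 le_rfl⟩
  have h := tendsto_measure_iInter_atTop (μ := μ.withDensity g)
    (fun R => (hmeas R).nullMeasurableSet) hanti
    ⟨0, by
      rw [withDensity_apply _ (hmeas 0)]
      exact ne_top_of_le_ne_top hg (setLIntegral_le_lintegral _ _)⟩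
  rw [hempty, measure_empty] at h
  simpa only [Function.comp_def, withDensity_apply _ (hmeas _)] using h

theorem MemLp.tendsto_eLpNorm_restrict_compl_closedBall {E : Type*} [NormedAddCommGroup E]
    {r : ℝ≥0∞} {ξ : α → E} (hξ : MemLp ξ r μ) (hr : r ≠ ∞) (c : α) :
    Tendsto (fun R : ℝ => eLpNorm ξ r (μ.restrict (Metric.closedBall c R)ᶜ)) atTop (𝓝 0) := by
  rcases eq_or_ne r 0 with rfl | hr0
  · simp
  have hpos : 0 < 1 / r.toReal := one_div_pos.2 (ENNReal.toReal_pos hr0 hr)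
  simp_rw [eLpNorm_eq_lintegral_rpow_enorm_toReal hr0 hr]
  have h := (ENNReal.continuous_rpow_const (y := 1 / r.toReal)).tendsto 0 |>.comp
    (tendsto_setLIntegral_compl_closedBall
      (lintegral_rpow_enorm_lt_top_of_eLpNorm_lt_top hr0 hr hξ.eLpNorm_lt_top).ne c)
  rwa [ENNReal.zero_rpow_of_pos hpos] at h

theorem tendsto_eLpNorm_one_abs_sub_mul_abs_sub {p : ℝ} (hp1 : 1 < p) (hp2 : p < 2)
    {ξ : α → ℝ} (hξ : MemLp ξ (ENNReal.ofReal (2 / (2 - p))) μ) {f : ℝ → ℝ}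
    {u : ℕ → α → ℝ} {u₀ : α → ℝ} (hun : ∀ n, MemLp (u n) 2 μ) (hu₀ : MemLp u₀ 2 μ)
    {C : ℝ≥0∞} (hC : C ≠ ∞) (hbdd : ∀ n, eLpNorm (u n) 2 μ ≤ C)
    (hfn : ∀ n x, |f (u n x)| ≤ ξ x * |u n x| ^ (p - 1))
    (hf0 : ∀ x, |f (u₀ x)| ≤ ξ x * |u₀ x| ^ (p - 1)) (c : α)
    (hloc : ∀ R : ℝ, 0 < R →
      Tendsto (fun n => eLpNorm (u n - u₀) 2 (μ.restrict (Metric.closedBall c R))) atTop (𝓝 0)) :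
    Tendsto (fun n => eLpNorm (fun x => |f (u n x) - f (u₀ x)| * |u n x - u₀ x|) 1 μ)
      atTop (𝓝 0) := by
  set r := ENNReal.ofReal (2 / (2 - p))
  obtain ⟨K, hK, hKbound⟩ : ∃ K ≠ ∞, ∀ s n,
      eLpNorm (u n) 2 (μ.restrict s) ^ (p - 1) + eLpNorm u₀ 2 (μ.restrict s) ^ (p - 1) ≤ K :=
    ⟨C ^ (p - 1) + eLpNorm u₀ 2 μ ^ (p - 1), by finiteness, fun s n => by
      gcongr
      · exact (eLpNorm_restrict_le _ _ _ _).trans (hbdd n)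
      · exact Measure.restrict_le_self⟩
  obtain ⟨L, hL, hLbound⟩ : ∃ L ≠ ∞, ∀ s n, eLpNorm (u n - u₀) 2 (μ.restrict s) ≤ L :=
    ⟨C + eLpNorm u₀ 2 μ, by finiteness, fun s n => (eLpNorm_restrict_le _ _ _ _).trans <|
      (eLpNorm_sub_le (hun n).1 hu₀.1 one_le_two).trans (by gcongr; exact hbdd n)⟩
  have hset : ∀ s n, eLpNorm (fun x => |f (u n x) - f (u₀ x)| * |u n x - u₀ x|) 1 (μ.restrict s)
      ≤ eLpNorm ξ r (μ.restrict s) * K * eLpNorm (u n - u₀) 2 (μ.restrict s) := fun s n =>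
    (eLpNorm_one_abs_sub_mul_abs_sub_le hp1 hp2 hξ.1.restrict (hun n).1.restrict
      hu₀.1.restrict (hfn n) hf0).trans (by gcongr; exact hKbound s n)
  refine ENNReal.tendsto_zero_of_le_add (l := (atTop : Filter ℝ))
    (b := fun R n => eLpNorm ξ r μ * K * eLpNorm (u n - u₀) 2 (μ.restrict (Metric.closedBall c R)))
    (c := fun R => eLpNorm ξ r (μ.restrict (Metric.closedBall c R)ᶜ) * K * L) ?_ ?_ ?_
  · filter_upwards [eventually_gt_atTop 0] with R hR
    simpa using ENNReal.Tendsto.const_mul (hloc R hR) (Or.inr (by finiteness))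
  · simpa only [mul_assoc, zero_mul] using ENNReal.Tendsto.mul_const (b := K * L)
      (MemLp.tendsto_eLpNorm_restrict_compl_closedBall hξ ENNReal.ofReal_ne_top c)
      (Or.inr (by finiteness))
  · refine Eventually.of_forall fun R n => ?_
    simp only [eLpNorm_one_eq_lintegral_enorm]
    rw [← lintegral_add_compl _ Metric.isClosed_closedBall.measurableSet]
    simp only [← eLpNorm_one_eq_lintegral_enorm]
    gcongr
    · exact (hset _ n).trans (by gcongr; exact Measure.restrict_le_self)
    · exact (hset _ n).trans (by gcongr; exact hLbound _ n)

end Tail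

theorem stmt9_general {N : ℕ} (p : ℝ) (hp1 : 1 < p) (hp2 : p < 2)
    (ξ : (Fin N → ℝ) → ℝ)
    (hξ : MemLp ξ (ENNReal.ofReal (2/(2-p))) volume)
    (f : ℝ → ℝ)
    (u : ℕ → (Fin N → ℝ) → ℝ) (u₀ : (Fin N → ℝ) → ℝ)
    (hun : ∀ n, MemLp (u n) 2 volume) (hu₀ : MemLp u₀ 2 volume)
    (hbdd : ∃ M : ℝ, ∀ n, (eLpNorm (u n) 2 volume).toReal ≤ M)
    (hfn : ∀ n x, |f (u n x)| ≤ ξ x * |u n x| ^ (p-1))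
    (hf0 : ∀ x, |f (u₀ x)| ≤ ξ x * |u₀ x| ^ (p-1))
    (hloc : ∀ R : ℝ, 0 < R →
      Tendsto (fun n => ∫ x in Metric.closedBall (0 : Fin N → ℝ) R, (u n x - u₀ x) ^ (2:ℕ))
        atTop (nhds 0)) :
    Tendsto (fun n => ∫ x, |f (u n x) - f (u₀ x)| * |u n x - u₀ x|) atTop (nhds 0) := by
  obtain ⟨M, hM⟩ := hbdd
  have hM' : ∀ n, eLpNorm (u n) 2 volume ≤ ENNReal.ofReal M := fun n => by
    rw [← ENNReal.ofReal_toReal (hun n).eLpNorm_ne_top]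
    exact ENNReal.ofReal_le_ofReal (hM n)
  exact tendsto_integral_zero_of_tendsto_eLpNorm_one <|
    tendsto_eLpNorm_one_abs_sub_mul_abs_sub hp1 hp2 hξ hun hu₀ ENNReal.ofReal_ne_top hM' hfn hf0 0
      fun R hR => tendsto_eLpNorm_two_of_tendsto_integral_sq
        (fun n => ((hun n).sub hu₀).restrict _) (hloc R hR)

/-- Key compactness estimate: under the sublinear growth `|f(u)| ≤ ξ(x)|u|^{p-1}` with
`ξ ∈ L^{2/(2-p)}`, a uniform `L²` bound and local strong `L²` convergence imply
`∫ |f(uₙ) - f(u₀)| |uₙ - u₀| → 0`. -/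
theorem stmt9 {N : ℕ} (p : ℝ) (hp1 : 1 < p) (hp2 : p < 2)
    (ξ : (Fin N → ℝ) → ℝ) (hξ0 : ∀ x, 0 ≤ ξ x)
    (hξ : MemLp ξ (ENNReal.ofReal (2/(2-p))) volume)
    (f : ℝ → ℝ) (hfc : Continuous f)
    (u : ℕ → (Fin N → ℝ) → ℝ) (u₀ : (Fin N → ℝ) → ℝ)
    (hun : ∀ n, MemLp (u n) 2 volume) (hu₀ : MemLp u₀ 2 volume)
    (hbdd : ∃ M : ℝ, ∀ n, (eLpNorm (u n) 2 volume).toReal ≤ M)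
    (hfn : ∀ n x, |f (u n x)| ≤ ξ x * |u n x| ^ (p-1))
    (hf0 : ∀ x, |f (u₀ x)| ≤ ξ x * |u₀ x| ^ (p-1))
    (hloc : ∀ R : ℝ, 0 < R →
      Tendsto (fun n => ∫ x in Metric.closedBall (0 : Fin N → ℝ) R, (u n x - u₀ x) ^ (2:ℕ))
        atTop (nhds 0)) :
    Tendsto (fun n => ∫ x, |f (u n x) - f (u₀ x)| * |u n x - u₀ x|) atTop (nhds 0) :=
  stmt9_general p hp1 hp2 ξ hξ f u u₀ hun hu₀ hbdd hfn hf0 hloc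
end

section
/- Let $V : \mathbb{R}^N \to [0,\infty)$ be continuous with $V_b = \{V < b\}$ of finite measure for some $b > 0$, and for $\lambda > 0$ define on a Hilbert space $E$ (of functions $w$ with trace $w(\cdot,0) \in L^2 \cap L^{2^*_s}$) the norms $\|w\|_\lambda^2 = \|w\|_D^2 + \lambda \int V(x)|w(x,0)|^2 dx$, where $\|w\|_D^2$ is a Dirichlet-type seminorm satisfying a Sobolev inequality $S \|w(\cdot,0)\|_{L^{2^*_s}}^2 \le \|w\|_D^2$. Then there exist $\lambda_0 > 0$ and $c_0 > 0$, both independent of $\lambda$, such that $\|w\|_1 \le c_0 \|w\|_\lambda$ for all $w \in E$ and all $\lambda \ge \lambda_0$; one may take $\lambda_0 = \frac{S}{b(S + |V_b|^{(2^*_s-2)/2^*_s})}$ and $c_0^2 = 1 + \frac{|V_b|^{(2^*_s-2)/2^*_s}}{S}$. -/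
/-!
Split `∫ |w(·,0)|²` over `V_b = {V < b}` and its complement. Off `V_b` one has `1 ≤ V / b`, so
that part is at most `b⁻¹ ∫ V |w(·,0)|²`. On `V_b`, which has finite measure, Hölder's inequality
with exponents `2^*_s / 2` and its conjugate followed by the Sobolev inequality bounds it by
`|V_b|^{(2^*_s-2)/2^*_s} ‖w‖_D² / S`. The choice of `λ₀` is exactly what makes `c₀² λ ≥ b⁻¹`.
-/

open MeasureTheory

section Integrals

variable {α : Type*} [MeasurableSpace α] {μ : Measure α}

lemma integral_sq_eq_toReal_eLpNorm_two_sq {f : α → ℝ} (hf : AEStronglyMeasurable f μ) :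
    ∫ x, f x ^ 2 ∂μ = (eLpNorm f 2 μ).toReal ^ 2 := by
  have hI : 0 ≤ ∫ x, ‖f x‖ ^ (2 : ℝ) ∂μ := integral_nonneg fun _ => by positivity
  rw [toReal_eLpNorm hf, lpNorm_eq_integral_norm_rpow_toReal two_ne_zero ENNReal.ofNat_ne_top hf,
    ENNReal.toReal_ofNat, ← Real.rpow_natCast, ← Real.rpow_mul hI]
  norm_num

lemma MeasureTheory.MemLp.integrableOn_sq {f : α → ℝ} {s : Set α} {q : ENNReal} (hq : 2 ≤ q)
    (hf : MemLp f q μ) (hs : μ s ≠ ⊤) : IntegrableOn (fun x => f x ^ 2) s μ := by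
  have : IsFiniteMeasure (μ.restrict s) := isFiniteMeasure_restrict.2 hs
  exact ((hf.restrict s).mono_exponent hq).integrable_sq

lemma setIntegral_sq_le_measure_rpow_mul_eLpNorm_sq {f : α → ℝ} {s : Set α} {q : ℝ}
    (hq : 2 ≤ q) (hf : MemLp f (ENNReal.ofReal q) μ) (hs : μ s ≠ ⊤) :
    ∫ x in s, f x ^ 2 ∂μ ≤
      (μ s).toReal ^ ((q - 2) / q) * (eLpNorm f (ENNReal.ofReal q) μ).toReal ^ 2 := by
  have hq0 : 0 < q := by linarith
  set e : ℝ := 1 / 2 - 1 / q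
  have he : 0 ≤ e := by
    simp only [e, sub_nonneg]
    gcongr
  have hHolder : eLpNorm f 2 (μ.restrict s) ≤ eLpNorm f (ENNReal.ofReal q) μ * μ s ^ e :=
    calc eLpNorm f 2 (μ.restrict s)
        ≤ eLpNorm f (ENNReal.ofReal q) (μ.restrict s) * μ.restrict s Set.univ ^ e := by
          convert eLpNorm_le_eLpNorm_mul_rpow_measure_univ
            (ENNReal.ofReal_ofNat 2 ▸ ENNReal.ofReal_le_ofReal hq) hf.1.restrict using 3
          simp [e, ENNReal.toReal_ofReal hq0.le]
      _ ≤ eLpNorm f (ENNReal.ofReal q) μ * μ s ^ e := by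
          rw [Measure.restrict_apply_univ]
          gcongr
          exact Measure.restrict_le_self
  have hHolder' : (eLpNorm f 2 (μ.restrict s)).toReal ≤
      (eLpNorm f (ENNReal.ofReal q) μ).toReal * (μ s).toReal ^ e := by
    rw [ENNReal.toReal_rpow, ← ENNReal.toReal_mul]
    exact ENNReal.toReal_mono (ENNReal.mul_ne_top hf.2.ne (ENNReal.rpow_ne_top_of_nonneg he hs))
      hHolder
  have hexp : ((μ s).toReal ^ e) ^ 2 = (μ s).toReal ^ ((q - 2) / q) := by
    rw [← Real.rpow_natCast, ← Real.rpow_mul ENNReal.toReal_nonneg]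
    congr 1
    simp only [e]
    field_simp
    ring
  rw [integral_sq_eq_toReal_eLpNorm_two_sq hf.1.restrict, ← hexp, ← mul_pow, mul_comm]
  gcongr

lemma integral_le_setIntegral_add_inv_mul_integral_mul {V g : α → ℝ} {b : ℝ} (hb : 0 < b)
    (hV0 : ∀ x, 0 ≤ V x) (hg0 : ∀ x, 0 ≤ g x) (hVb : MeasurableSet {x | V x < b})
    (hg : AEStronglyMeasurable g μ) (hgVb : IntegrableOn g {x | V x < b} μ)
    (hVg : Integrable (fun x => V x * g x) μ) :
    ∫ x, g x ∂μ ≤ ∫ x in {x | V x < b}, g x ∂μ + b⁻¹ * ∫ x, V x * g x ∂μ := by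
  have hle : ∀ x ∈ {x | V x < b}ᶜ, g x ≤ b⁻¹ * (V x * g x) := fun x hx => by
    rw [← mul_assoc]
    exact le_mul_of_one_le_left (hg0 x) ((one_le_inv_mul₀ hb).2 (not_lt.mp hx))
  have hgc : IntegrableOn g {x | V x < b}ᶜ μ := by
    refine (hVg.const_mul b⁻¹).integrableOn.mono' hg.restrict ?_
    rw [ae_restrict_iff' hVb.compl]
    exact .of_forall fun x hx => (Real.norm_of_nonneg (hg0 x)).trans_le (hle x hx)
  have hgc_le : ∫ x in {x | V x < b}ᶜ, g x ∂μ ≤ b⁻¹ * ∫ x, V x * g x ∂μ :=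
    calc ∫ x in {x | V x < b}ᶜ, g x ∂μ ≤ ∫ x in {x | V x < b}ᶜ, b⁻¹ * (V x * g x) ∂μ :=
        setIntegral_mono_on hgc (hVg.const_mul b⁻¹).integrableOn hVb.compl hle
    _ = b⁻¹ * ∫ x in {x | V x < b}ᶜ, V x * g x ∂μ := integral_const_mul _ _
    _ ≤ b⁻¹ * ∫ x, V x * g x ∂μ := by
        gcongr
        exacts [.of_forall fun x => mul_nonneg (hV0 x) (hg0 x), Measure.restrict_le_self]
  linarith [integral_add_compl hVb (integrableOn_univ.1 (by simpa using hgVb.union hgc))]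

end Integrals

lemma inv_le_one_add_div_mul_of_div_le {S M b lam : ℝ} (hS : 0 < S) (hM : 0 ≤ M) (hb : 0 < b)
    (hlam : S / (b * (S + M)) ≤ lam) : b⁻¹ ≤ (1 + M / S) * lam := by
  have hSM : 0 < S + M := by linarith
  calc b⁻¹ = (1 + M / S) * (S / (b * (S + M))) := by field_simp
    _ ≤ (1 + M / S) * lam := by gcongr

theorem stmt14_general {N : ℕ} {E : Type*} (s : ℝ) (hs0 : 0 < s)
    (h2s : 2*s < (N:ℝ))
    (V : (Fin N → ℝ) → ℝ) (hVc : Continuous V) (hV0 : ∀ x, 0 ≤ V x)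
    (b : ℝ) (hb : 0 < b) (hVb : volume {x : Fin N → ℝ | V x < b} ≠ ⊤)
    (nD : E → ℝ)
    (tr : E → (Fin N → ℝ) → ℝ)
    (htrm : ∀ w, AEStronglyMeasurable (tr w) volume)
    (hVint : ∀ w, Integrable (fun x => V x * (tr w x) ^ (2:ℕ)) volume)
    (hLp : ∀ w, MemLp (tr w) (ENNReal.ofReal (2*(N:ℝ)/((N:ℝ)-2*s))) volume)
    (S : ℝ) (hS : 0 < S)
    (hSob : ∀ w, S * ((eLpNorm (tr w) (ENNReal.ofReal (2*(N:ℝ)/((N:ℝ)-2*s)))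
      volume).toReal) ^ (2:ℕ) ≤ nD w) :
    ∀ lam : ℝ,
      S / (b * (S + (volume {x : Fin N → ℝ | V x < b}).toReal ^
        ((2*(N:ℝ)/((N:ℝ)-2*s) - 2)/(2*(N:ℝ)/((N:ℝ)-2*s))))) ≤ lam →
      ∀ w : E,
        Real.sqrt (nD w + ∫ x, (tr w x) ^ (2:ℕ)) ≤
          Real.sqrt (1 + (volume {x : Fin N → ℝ | V x < b}).toReal ^
              ((2*(N:ℝ)/((N:ℝ)-2*s) - 2)/(2*(N:ℝ)/((N:ℝ)-2*s))) / S) *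
            Real.sqrt (nD w + lam * ∫ x, V x * (tr w x) ^ (2:ℕ)) := by
  intro lam hlam w
  set q : ℝ := 2*(N:ℝ)/((N:ℝ)-2*s)
  have hq : 2 ≤ q := by
    rw [le_div_iff₀ (by linarith)]
    linarith
  set M : ℝ := (volume {x : Fin N → ℝ | V x < b}).toReal ^ ((q - 2) / q)
  have hM : 0 ≤ M := by positivity
  have hJ : 0 ≤ ∫ x, V x * tr w x ^ 2 := integral_nonneg fun x => mul_nonneg (hV0 x) (by positivity)
  have hSobw : (eLpNorm (tr w) (ENNReal.ofReal q) volume).toReal ^ 2 ≤ nD w / S := by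
    rw [le_div_iff₀ hS, mul_comm]
    exact hSob w
  have hsplit : ∫ x, tr w x ^ 2 ≤ M * (nD w / S) + b⁻¹ * ∫ x, V x * tr w x ^ 2 :=
    calc ∫ x, tr w x ^ 2
        ≤ (∫ x in {x | V x < b}, tr w x ^ 2) + b⁻¹ * ∫ x, V x * tr w x ^ 2 :=
          integral_le_setIntegral_add_inv_mul_integral_mul hb hV0 (fun x => sq_nonneg _)
            (isOpen_lt hVc continuous_const).measurableSet ((htrm w).pow 2)
            ((hLp w).integrableOn_sq (ENNReal.ofReal_ofNat 2 ▸ ENNReal.ofReal_le_ofReal hq) hVb)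
            (hVint w)
      _ ≤ M * (eLpNorm (tr w) (ENNReal.ofReal q) volume).toReal ^ 2
            + b⁻¹ * ∫ x, V x * tr w x ^ 2 :=
          add_le_add_left (setIntegral_sq_le_measure_rpow_mul_eLpNorm_sq hq (hLp w) hVb) _
      _ ≤ M * (nD w / S) + b⁻¹ * ∫ x, V x * tr w x ^ 2 := by gcongr
  have hcoef : b⁻¹ ≤ (1 + M / S) * lam := inv_le_one_add_div_mul_of_div_le hS hM hb hlam
  rw [← Real.sqrt_mul (by positivity)]
  apply Real.sqrt_le_sqrt
  linear_combination hsplit + mul_le_mul_of_nonneg_right hcoef hJ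

/-- Uniform norm comparison (inequality (2.5)): with `‖w‖_λ² = ‖w‖_D² + λ∫V|tr w|²`,
a Sobolev inequality `S ‖tr w‖²_{2^*_s} ≤ ‖w‖_D²`, and `|V_b| < ∞`, one has
`‖w‖₁ ≤ c₀ ‖w‖_λ` for all `λ ≥ λ₀ = S/(b(S + |V_b|^{(2^*_s-2)/2^*_s}))`, with
`c₀² = 1 + |V_b|^{(2^*_s-2)/2^*_s}/S`. -/
theorem stmt14 {N : ℕ} {E : Type*} (s : ℝ) (hs0 : 0 < s) (hs1 : s < 1)
    (h2s : 2*s < (N:ℝ))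
    (V : (Fin N → ℝ) → ℝ) (hVc : Continuous V) (hV0 : ∀ x, 0 ≤ V x)
    (b : ℝ) (hb : 0 < b) (hVb : volume {x : Fin N → ℝ | V x < b} ≠ ⊤)
    (nD : E → ℝ) (hnD : ∀ w, 0 ≤ nD w)
    (tr : E → (Fin N → ℝ) → ℝ)
    (htrm : ∀ w, AEStronglyMeasurable (tr w) volume)
    (hVint : ∀ w, Integrable (fun x => V x * (tr w x) ^ (2:ℕ)) volume)
    (hLp : ∀ w, MemLp (tr w) (ENNReal.ofReal (2*(N:ℝ)/((N:ℝ)-2*s))) volume)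
    (S : ℝ) (hS : 0 < S)
    (hSob : ∀ w, S * ((eLpNorm (tr w) (ENNReal.ofReal (2*(N:ℝ)/((N:ℝ)-2*s)))
      volume).toReal) ^ (2:ℕ) ≤ nD w) :
    ∀ lam : ℝ,
      S / (b * (S + (volume {x : Fin N → ℝ | V x < b}).toReal ^
        ((2*(N:ℝ)/((N:ℝ)-2*s) - 2)/(2*(N:ℝ)/((N:ℝ)-2*s))))) ≤ lam →
      ∀ w : E,
        Real.sqrt (nD w + ∫ x, (tr w x) ^ (2:ℕ)) ≤
          Real.sqrt (1 + (volume {x : Fin N → ℝ | V x < b}).toReal ^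
              ((2*(N:ℝ)/((N:ℝ)-2*s) - 2)/(2*(N:ℝ)/((N:ℝ)-2*s))) / S) *
            Real.sqrt (nD w + lam * ∫ x, V x * (tr w x) ^ (2:ℕ)) :=
  stmt14_general s hs0 h2s V hVc hV0 b hb hVb nD tr htrm hVint hLp S hS hSob
end
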